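/- Work in the polynomial ring ℤ[q]. For natural numbers n ≥ k, let S_q[n,k] = h_{n-k}([0]_q, [1]_q, …, [k]_q) be the q-Stirling number of the second kind, and let Ŝ_q[n,k] = q^{C(k,2)} · S_q[n,k] (Ehrenborg's q-Stirling number), where C(k,2) = k(k-1)/2. Then for all natural numbers s and r, the determinant of the (r+1)×(r+1) matrix with (i,j) entry Ŝ_q[s+i+j, s+j] (0 ≤ i, j ≤ r) equals q^{C(s+r+1,3) - C(s,3)} · ∏_{k=0}^{r} ([s+k]_q)^k, where C(m,3) denotes the binomial coefficient m choose 3. -/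
import Mathlib


open Finset Polynomial

/-- Complete homogeneous symmetric function `h_t` of the entries of a list. -/
def hsymmList {K : Type*} [CommRing K] : List K → ℕ → K
  | _, 0 => 1
  | [], _ + 1 => 0
  | a :: l, t + 1 => a * hsymmList (a :: l) t + hsymmList l (t + 1)
  termination_by l t => (l.length, t)

/-- The q-integer `[i]_q = 1 + q + ⋯ + q^{i-1}` as a polynomial in `ℤ[q]`. -/
noncomputable def qInt (i : ℕ) : Polynomial ℤ := ∑ j ∈ Finset.range i, Polynomial.X ^ j

/-- The q-Stirling number of the second kind `S_q[n,k] = h_{n-k}([0]_q, [1]_q, …, [k]_q)`,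
set to `0` when `k > n`. -/
noncomputable def Sq (n k : ℕ) : Polynomial ℤ :=
  if k ≤ n then hsymmList (List.ofFn fun j : Fin (k + 1) => qInt (j : ℕ)) (n - k) else 0

/-- Ehrenborg's q-Stirling number `Ŝ_q[n,k] = q^{C(k,2)} S_q[n,k]`. -/
noncomputable def Shatq (n k : ℕ) : Polynomial ℤ := Polynomial.X ^ (k.choose 2) * Sq n k

lemma hsymm_cons {K : Type*} [CommRing K] (a : K) (l : List K) (t : ℕ) :
    hsymmList (a :: l) (t + 1) = a * hsymmList (a :: l) t + hsymmList l (t + 1) := by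
  rw [hsymmList]

/-- `h` peels off the *last* element of the list as well. -/
lemma hsymm_concat {K : Type*} [CommRing K] (l : List K) (x : K) (t : ℕ) :
    hsymmList (l ++ [x]) (t + 1) =
      x * hsymmList (l ++ [x]) t + hsymmList l (t + 1) := by
  induction l generalizing t with
  | nil => simp [hsymm_cons, hsymmList]
  | cons a l' ih =>
    induction t with
    | zero => simp [hsymm_cons, hsymmList, ih 0]; ring
    | succ t iht =>
      rw [List.cons_append] at iht ⊢
      rw [hsymm_cons a (l' ++ [x]) (t + 1), hsymm_cons a l' (t + 1), ih (t + 1)]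
      linear_combination a * iht - x * hsymm_cons a (l' ++ [x]) t

lemma ofFn_qInt_succ (k : ℕ) :
    (List.ofFn fun j : Fin (k + 2) => qInt (j : ℕ)) =
      (List.ofFn fun j : Fin (k + 1) => qInt (j : ℕ)) ++ [qInt (k + 1)] := by
  rw [List.ofFn_succ']
  simp [List.concat_eq_append]

lemma Sq_rec (n k : ℕ) (h : k ≤ n) :
    Sq (n + 1) (k + 1) = Sq n k + qInt (k + 1) * Sq n (k + 1) := by
  rcases Nat.lt_or_ge k n with hlt | hge
  · obtain ⟨t, ht⟩ : ∃ t, n - k = t + 1 := ⟨n - k - 1, by omega⟩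
    rw [Sq, Sq, Sq, if_pos (by omega), if_pos (by omega), if_pos (by omega)]
    have h1 : n + 1 - (k + 1) = t + 1 := by omega
    have h2 : n - (k + 1) = t := by omega
    rw [h1, h2, ht, ofFn_qInt_succ, hsymm_concat]
    ring
  · have hkn : k = n := le_antisymm h hge
    subst hkn
    rw [Sq, Sq, Sq, if_pos le_rfl, if_pos le_rfl, if_neg (by omega)]
    simp [hsymmList]

/-- The unconditional recurrence for Ehrenborg's q-Stirling numbers. -/
lemma Shatq_rec (n k : ℕ) :
    Shatq (n + 1) (k + 1) =
      Polynomial.X ^ k * Shatq n k + qInt (k + 1) * Shatq n (k + 1) := by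
  rcases Nat.lt_or_ge n k with hlt | hge
  · have e1 : Sq (n + 1) (k + 1) = 0 := by rw [Sq, if_neg (by omega)]
    have e2 : Sq n k = 0 := by rw [Sq, if_neg (by omega)]
    have e3 : Sq n (k + 1) = 0 := by rw [Sq, if_neg (by omega)]
    simp [Shatq, e1, e2, e3]
  · rw [Shatq, Shatq, Shatq, Sq_rec n k hge]
    have : (k + 1).choose 2 = k.choose 2 + k := by
      rw [Nat.choose_succ_succ]; simp [Nat.choose_one_right, Nat.add_comm]
    rw [this, pow_add]
    ring

lemma Sq_self (n : ℕ) : Sq n n = 1 := by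
  rw [Sq, if_pos le_rfl, Nat.sub_self]
  rw [hsymmList]

lemma Shatq_self (n : ℕ) : Shatq n n = Polynomial.X ^ (n.choose 2) := by
  rw [Shatq, Sq_self, mul_one]

lemma Shatq_zero {n k : ℕ} (h : n < k) : Shatq n k = 0 := by
  rw [Shatq, Sq, if_neg (by omega), mul_zero]

theorem Shatq_det (s r : ℕ) :
    Matrix.det (Matrix.of fun i j : Fin (r + 1) =>
        Shatq (s + (i : ℕ) + (j : ℕ)) (s + (j : ℕ))) =
      Polynomial.X ^ ((s + r + 1).choose 3 - s.choose 3) *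
        ∏ k ∈ Finset.range (r + 1), (qInt (s + k)) ^ k := by
  induction r generalizing s with
  | zero =>
    rw [Matrix.det_fin_one]
    have hc : (s + 0 + 1).choose 3 - s.choose 3 = s.choose 2 := by
      rw [show s + 0 + 1 = s + 1 from rfl]
      have : (s + 1).choose 3 = s.choose 2 + s.choose 3 := Nat.choose_succ_succ s 2
      omega
    simp [Shatq_self, hc]
  | succ r ih =>
    -- the column-reduced matrix B
    set B : Matrix (Fin (r + 2)) (Fin (r + 2)) (Polynomial ℤ) :=
      Matrix.of fun i j => Fin.cases (Shatq (s + (i : ℕ)) s)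
        (fun j' : Fin (r + 1) =>
          qInt (s + (j' : ℕ) + 1) * Shatq (s + (i : ℕ) + (j' : ℕ)) (s + (j' : ℕ) + 1)) j
      with hB
    have step1 : Matrix.det (Matrix.of fun i j : Fin (r + 2) =>
        Shatq (s + (i : ℕ) + (j : ℕ)) (s + (j : ℕ))) = Matrix.det B := by
      apply Matrix.det_eq_of_forall_col_eq_smul_add_pred
        (fun j : Fin (r + 1) => Polynomial.X ^ (s + (j : ℕ)))
      · intro i
        simp [hB]
      · intro i j
        have key := Shatq_rec (s + (i : ℕ) + (j : ℕ)) (s + (j : ℕ))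
        have e1 : s + (i : ℕ) + ((j.succ : Fin (r + 2)) : ℕ) = s + (i : ℕ) + (j : ℕ) + 1 := by
          simp only [Fin.val_succ]; omega
        have e2 : s + ((j.succ : Fin (r + 2)) : ℕ) = s + (j : ℕ) + 1 := by
          simp [Fin.val_succ]; omega
        simp only [Matrix.of_apply, hB, Fin.cases_succ, Fin.coe_castSucc, e1, e2]
        rw [key]; ring
    rw [step1]
    -- expand along the first row
    rw [Matrix.det_succ_row_zero, Fin.sum_univ_succ]
    have hzero : ∀ j : Fin (r + 1),
        (-1 : Polynomial ℤ) ^ ((j.succ : Fin (r + 2)) : ℕ) * B 0 j.succ *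
          Matrix.det (B.submatrix Fin.succ (j.succ).succAbove) = 0 := by
      intro j
      have : B 0 j.succ = 0 := by
        simp only [hB, Matrix.of_apply, Fin.cases_succ, Fin.val_zero]
        rw [Shatq_zero (by omega), mul_zero]
      rw [this, mul_zero, zero_mul]
    rw [Finset.sum_congr rfl (fun j _ => hzero j), Finset.sum_const, smul_zero, add_zero]
    have hB00 : B 0 0 = Polynomial.X ^ (s.choose 2) := by
      simp only [hB, Matrix.of_apply, Fin.cases_zero, Fin.val_zero, Nat.add_zero]
      exact Shatq_self s
    -- the minor
    have hsub : B.submatrix Fin.succ ((0 : Fin (r + 2)).succAbove) =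
        Matrix.of (fun i j : Fin (r + 1) =>
          qInt (s + 1 + (j : ℕ)) *
            Shatq ((s + 1) + (i : ℕ) + (j : ℕ)) ((s + 1) + (j : ℕ))) := by
      ext i j
      simp only [Matrix.submatrix_apply, Fin.succAbove_zero, hB, Matrix.of_apply,
        Fin.cases_succ, Fin.val_succ]
      have e1 : s + (j : ℕ) + 1 = s + 1 + (j : ℕ) := by omega
      have e2 : s + ((i : ℕ) + 1) + (j : ℕ) = s + 1 + (i : ℕ) + (j : ℕ) := by omega
      rw [e1, e2]
    rw [hsub, hB00]
    have hfac : Matrix.det (Matrix.of (fun i j : Fin (r + 1) =>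
          qInt (s + 1 + (j : ℕ)) *
            Shatq ((s + 1) + (i : ℕ) + (j : ℕ)) ((s + 1) + (j : ℕ)))) =
        (∏ j : Fin (r + 1), qInt (s + 1 + (j : ℕ))) *
          Matrix.det (Matrix.of (fun i j : Fin (r + 1) =>
            Shatq ((s + 1) + (i : ℕ) + (j : ℕ)) ((s + 1) + (j : ℕ)))) :=
      Matrix.det_mul_row _ _
    rw [hfac, ih (s + 1)]
    -- now pure algebra
    rw [Fin.prod_univ_eq_prod_range (fun j => qInt (s + 1 + j)) (r + 1)]
    have hprod : ∏ k ∈ Finset.range (r + 2), (qInt (s + k)) ^ k =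
        (∏ j ∈ Finset.range (r + 1), qInt (s + 1 + j)) *
          ∏ k ∈ Finset.range (r + 1), (qInt (s + 1 + k)) ^ k := by
      rw [Finset.prod_range_succ' (fun k => (qInt (s + k)) ^ k) (r + 1)]
      rw [← Finset.prod_mul_distrib]
      simp only [pow_zero, mul_one]
      refine Finset.prod_congr rfl fun k _ => ?_
      rw [show s + (k + 1) = s + 1 + k by omega, pow_succ]
      ring
    have hpow : s.choose 2 + ((s + 1 + r + 1).choose 3 - (s + 1).choose 3) =
        (s + (r + 1) + 1).choose 3 - s.choose 3 := by
      have h1 : (s + 1).choose 3 = s.choose 2 + s.choose 3 := Nat.choose_succ_succ s 2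
      have h2 : (s + 1).choose 3 ≤ (s + 1 + r + 1).choose 3 :=
        Nat.choose_le_choose 3 (by omega)
      have h3 : (s + (r + 1) + 1).choose 3 = (s + 1 + r + 1).choose 3 := by
        rw [show s + (r + 1) + 1 = s + 1 + r + 1 by omega]
      omega
    rw [hprod, ← hpow, pow_add]
    simp only [Fin.val_zero, pow_zero, one_mul, mul_one]
    ring
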